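/- Let U ∈ ℝ^{n×r}, let P be an orthogonal projection matrix in ℝ^{r×r} of rank k > 0, and consider l(B) = −n·log det₀(B) − tr(U B† Uᵀ) over the set of positive semidefinite matrices B with column space equal to range(P). Assuming P Uᵀ U P restricted to range(P) is positive definite, the maximizer is B* = n⁻¹ P Uᵀ U P, and the maximum value is nk·log n − nk − n·log det₀(P Uᵀ U P). -/

import Mathlib

open Matrix

/-- `IsMoorePenrose A B` states that `B` is the Moore–Penrose pseudoinverse of `A`. -/
def IsMoorePenrose {m n : Type*} [Fintype m] [Fintype n]
    (A : Matrix m n ℝ) (B : Matrix n m ℝ) : Prop :=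
  A * B * A = A ∧ B * A * B = B ∧ (A * B)ᵀ = A * B ∧ (B * A)ᵀ = B * A

/- The Moore–Penrose pseudoinverse of a real square matrix (defined by choice;
it always exists and is unique). -/
open Classical in
noncomputable def pinv {r : ℕ} (M : Matrix (Fin r) (Fin r) ℝ) : Matrix (Fin r) (Fin r) ℝ :=
  if h : ∃ B, IsMoorePenrose M B then h.choose else 0

/-- `det0 M` is the product of the nonzero eigenvalues of a symmetric matrix `M`
(junk value 0 if `M` is not Hermitian). -/
noncomputable def det0 {r : ℕ} (M : Matrix (Fin r) (Fin r) ℝ) : ℝ :=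
  if h : M.IsHermitian then
    ∏ i : Fin r, if h.eigenvalues i = 0 then 1 else h.eigenvalues i
  else 0

/-! Diagonalize `B = V diag(d) Vᵀ`. Because `log 0 = 0` and `0⁻¹ = 0`, the objective becomes
`l B = ∑_{dᵢ ≠ 0} (-n log dᵢ - wᵢ / dᵢ)` with `wᵢ = vᵢᵀ UᵀU vᵢ`, and each summand is at most
`-n log (wᵢ / n) - n`, attained at `dᵢ = wᵢ / n`. The `vᵢ` with `dᵢ ≠ 0` form an orthonormal
basis of `range P`, on which `wᵢ / n = vᵢᵀ B* vᵢ`. Writing `B* = Z diag(e) Zᵀ`, the weights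
`(zⱼ ⬝ vᵢ)²` between the two orthonormal bases of `range P` are doubly stochastic, so concavity
of `log` gives the Hadamard-type inequality `∑ log eⱼ ≤ ∑ log (vᵢᵀ B* vᵢ)`, which is
`l B ≤ l B*`. -/

open Real Finset

theorem IsMoorePenrose.unique {m n : Type*} [Fintype m] [Fintype n]
    {A : Matrix m n ℝ} {B C : Matrix n m ℝ}
    (hB : IsMoorePenrose A B) (hC : IsMoorePenrose A C) : B = C := by
  obtain ⟨hB1, hB2, hB3, hB4⟩ := hB
  obtain ⟨hC1, hC2, hC3, hC4⟩ := hC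
  have hAB : A * B = A * C :=
    calc A * B = (A * C * (A * B))ᵀ := by rw [← Matrix.mul_assoc, hC1, hB3]
    _ = A * B * (A * C) := by rw [transpose_mul, hB3, hC3]
    _ = A * C := by rw [← Matrix.mul_assoc, hB1]
  have hBA : B * A = C * A :=
    calc B * A = (B * A * (C * A))ᵀ := by
          rw [Matrix.mul_assoc, ← Matrix.mul_assoc A, hC1, hB4]
    _ = C * A * (B * A) := by rw [transpose_mul, hB4, hC4]
    _ = C * A := by rw [Matrix.mul_assoc, ← Matrix.mul_assoc A, hB1]
  calc B = B * A * B := hB2.symm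
  _ = C * A * C := by rw [Matrix.mul_assoc, hAB, ← Matrix.mul_assoc, hBA]
  _ = C := hC2

theorem pinv_eq_of_isMoorePenrose {r : ℕ} {A B : Matrix (Fin r) (Fin r) ℝ}
    (h : IsMoorePenrose A B) : pinv A = B := by
  have hex : ∃ B, IsMoorePenrose A B := ⟨B, h⟩
  rw [pinv, dif_pos hex]
  exact hex.choose_spec.unique h

theorem range_mulVecLin_smul {ι : Type*} [Fintype ι] (A : Matrix ι ι ℝ) {c : ℝ} (hc : c ≠ 0) :
    LinearMap.range (c • A).mulVecLin = LinearMap.range A.mulVecLin := by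
  rw [show (c • A).mulVecLin = c • A.mulVecLin from LinearMap.ext fun x => smul_mulVec c A x,
    LinearMap.range_smul _ _ hc]

section Orthogonal

variable {ι : Type*} [Fintype ι] [DecidableEq ι] {V : Matrix ι ι ℝ}

theorem conj_diagonal_mul_conj_diagonal (hV : Vᵀ * V = 1) (a b : ι → ℝ) :
    V * diagonal a * Vᵀ * (V * diagonal b * Vᵀ) = V * diagonal (a * b) * Vᵀ := by
  simp only [Matrix.mul_assoc]
  rw [← Matrix.mul_assoc Vᵀ, hV, Matrix.one_mul, ← Matrix.mul_assoc (diagonal a),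
    diagonal_mul_diagonal]
  rfl

theorem transpose_conj_diagonal (a : ι → ℝ) :
    (V * diagonal a * Vᵀ)ᵀ = V * diagonal a * Vᵀ := by
  simp [Matrix.mul_assoc]

theorem isMoorePenrose_conj_diagonal (hV : Vᵀ * V = 1) (d : ι → ℝ) :
    IsMoorePenrose (V * diagonal d * Vᵀ) (V * diagonal d⁻¹ * Vᵀ) := by
  simp only [IsMoorePenrose, conj_diagonal_mul_conj_diagonal hV, transpose_conj_diagonal]
  refine ⟨?_, ?_, trivial, trivial⟩ <;> congr 3 <;> funext i <;>
    rcases eq_or_ne (d i) 0 with h | h <;> simp [h]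

theorem transpose_mulVec_row (hV : Vᵀ * V = 1) (i : ι) : Vᵀ *ᵥ Vᵀ i = Pi.single i 1 := by
  ext j
  simpa [mul_apply, mulVec, dotProduct, one_apply, Pi.single_apply, eq_comm] using
    congrFun (congrFun hV j) i

theorem conj_diagonal_mulVec_row (hV : Vᵀ * V = 1) (d : ι → ℝ) (i : ι) :
    (V * diagonal d * Vᵀ) *ᵥ Vᵀ i = d i • Vᵀ i := by
  rw [← mulVec_mulVec, ← mulVec_mulVec, transpose_mulVec_row hV, diagonal_mulVec_single]
  ext j
  simp [mulVec_single, mul_comm]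

theorem dotProduct_conj_diagonal_mulVec (d x : ι → ℝ) :
    x ⬝ᵥ (V * diagonal d * Vᵀ) *ᵥ x = ∑ i, d i * (Vᵀ i ⬝ᵥ x) ^ 2 := by
  rw [← mulVec_mulVec, ← mulVec_mulVec, dotProduct_mulVec, ← mulVec_transpose]
  simp only [dotProduct, mulVec_diagonal]
  refine sum_congr rfl fun i _ => ?_
  simp only [mulVec, dotProduct]
  ring

theorem trace_conj_diagonal_mul (d : ι → ℝ) (G : Matrix ι ι ℝ) :
    (V * diagonal d * Vᵀ * G).trace = ∑ i, d i * (Vᵀ i ⬝ᵥ G *ᵥ Vᵀ i) := by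
  rw [Matrix.mul_assoc, trace_mul_comm, ← Matrix.mul_assoc]
  simp only [trace, diag_apply, mul_diagonal, mul_mul_apply, mul_comm]

theorem sum_sq_dotProduct_row (hV : Vᵀ * V = 1) (x : ι → ℝ) :
    ∑ i, (Vᵀ i ⬝ᵥ x) ^ 2 = x ⬝ᵥ x := by
  simpa [mul_eq_one_comm.mp hV] using (dotProduct_conj_diagonal_mulVec (V := V) 1 x).symm

theorem dotProduct_row_self (hV : Vᵀ * V = 1) (i : ι) : Vᵀ i ⬝ᵥ Vᵀ i = 1 := by
  simpa [mul_apply, dotProduct] using congrFun (congrFun hV i) i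

theorem row_mem_range_conj_diagonal (hV : Vᵀ * V = 1) {d : ι → ℝ} {i : ι} (hi : d i ≠ 0) :
    Vᵀ i ∈ LinearMap.range (V * diagonal d * Vᵀ).mulVecLin :=
  ⟨(d i)⁻¹ • Vᵀ i, by
    rw [mulVecLin_apply, mulVec_smul, conj_diagonal_mulVec_row hV, smul_smul, inv_mul_cancel₀ hi,
      one_smul]⟩

/-- Rows of `Vᵀ` outside the support of `d` lie in the kernel of the symmetric matrix
`V diag(d) Vᵀ`, hence are orthogonal to its range. -/
theorem sum_sq_dotProduct_row_of_mem_range (hV : Vᵀ * V = 1) {d x : ι → ℝ}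
    (hx : x ∈ LinearMap.range (V * diagonal d * Vᵀ).mulVecLin) :
    ∑ i ∈ univ.filter (d · ≠ 0), (Vᵀ i ⬝ᵥ x) ^ 2 = x ⬝ᵥ x := by
  obtain ⟨y, rfl⟩ := hx
  rw [← sum_sq_dotProduct_row hV, sum_filter_of_ne]
  intro i _ hi
  contrapose! hi
  rw [mulVecLin_apply, dotProduct_mulVec, ← mulVec_transpose, transpose_conj_diagonal,
    conj_diagonal_mulVec_row hV, hi, zero_smul, zero_dotProduct, sq, zero_mul]

theorem rank_conj_diagonal (hV : Vᵀ * V = 1) (d : ι → ℝ) :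
    (V * diagonal d * Vᵀ).rank = (univ.filter (d · ≠ 0)).card := by
  rw [rank_mul_eq_left_of_isUnit_det _ _ (isUnit_det_of_left_inverse (mul_eq_one_comm.mp hV)),
    rank_mul_eq_right_of_isUnit_det _ _ (isUnit_det_of_left_inverse hV), rank_diagonal,
    Fintype.card_subtype]

theorem card_filter_ne_zero_eq_of_range_eq {W : Matrix ι ι ℝ} {d e : ι → ℝ}
    (hV : Vᵀ * V = 1) (hW : Wᵀ * W = 1)
    (hrange : LinearMap.range (V * diagonal d * Vᵀ).mulVecLin =
      LinearMap.range (W * diagonal e * Wᵀ).mulVecLin) :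
    (univ.filter (d · ≠ 0)).card = (univ.filter (e · ≠ 0)).card := by
  rw [← rank_conj_diagonal hV, ← rank_conj_diagonal hW, Matrix.rank, Matrix.rank, hrange]

theorem charpoly_conj_diagonal (hV : Vᵀ * V = 1) (d : ι → ℝ) :
    (V * diagonal d * Vᵀ).charpoly = ∏ i, (Polynomial.X - Polynomial.C (d i)) := by
  rw [charpoly_mul_comm, ← Matrix.mul_assoc, hV, Matrix.one_mul, charpoly_diagonal]

theorem Matrix.PosSemidef.exists_conj_diagonal {A : Matrix ι ι ℝ} (hA : A.PosSemidef) :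
    ∃ V : Matrix ι ι ℝ, ∃ d : ι → ℝ, Vᵀ * V = 1 ∧ 0 ≤ d ∧ A = V * diagonal d * Vᵀ := by
  refine ⟨hA.1.eigenvectorUnitary, hA.1.eigenvalues, ?_, hA.eigenvalues_nonneg, ?_⟩
  · simpa [star_eq_conjTranspose] using Unitary.coe_star_mul_self hA.1.eigenvectorUnitary
  · conv_lhs => rw [hA.1.spectral_theorem]
    simp [Unitary.conjStarAlgAut_apply, star_eq_conjTranspose]

end Orthogonal

theorem neg_mul_log_sub_div_le {N d w : ℝ} (hN : 0 < N) (hd : 0 < d) (hw : 0 < w) :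
    -N * log d - w / d ≤ -N * log (w / N) - N := by
  have h := log_le_sub_one_of_pos (div_pos hw (mul_pos hN hd))
  rw [div_mul_eq_div_div, log_div (div_pos hw hN).ne' hd.ne'] at h
  have := mul_le_mul_of_nonneg_left h hN.le
  rw [show N * (w / N / d - 1) = w / d - N by field_simp] at this
  linarith

theorem sum_log_le_sum_log_sum_mul {ι κ : Type*} {s : Finset ι} {t : Finset κ}
    {q : ι → κ → ℝ} {e : κ → ℝ} (hq : ∀ i ∈ s, ∀ j ∈ t, 0 ≤ q i j)
    (hrow : ∀ i ∈ s, ∑ j ∈ t, q i j = 1) (hcol : ∀ j ∈ t, ∑ i ∈ s, q i j = 1)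
    (he : ∀ j ∈ t, 0 < e j) :
    ∑ j ∈ t, log (e j) ≤ ∑ i ∈ s, log (∑ j ∈ t, q i j * e j) :=
  calc ∑ j ∈ t, log (e j) = ∑ i ∈ s, ∑ j ∈ t, q i j * log (e j) := by
        rw [sum_comm]
        exact sum_congr rfl fun j hj => by rw [← sum_mul, hcol j hj, one_mul]
    _ ≤ ∑ i ∈ s, log (∑ j ∈ t, q i j * e j) := sum_le_sum fun i hi =>
        strictConcaveOn_log_Ioi.concaveOn.le_map_sum (hq i hi) (hrow i hi) he

theorem sum_log_le_sum_log_dotProduct_conj_diagonal_mulVec {ι : Type*} [Fintype ι]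
    [DecidableEq ι] {V W : Matrix ι ι ℝ} {d e : ι → ℝ}
    (hV : Vᵀ * V = 1) (hW : Wᵀ * W = 1) (he : 0 ≤ e)
    (hrange : LinearMap.range (V * diagonal d * Vᵀ).mulVecLin =
      LinearMap.range (W * diagonal e * Wᵀ).mulVecLin) :
    ∑ j ∈ univ.filter (e · ≠ 0), log (e j) ≤
      ∑ i ∈ univ.filter (d · ≠ 0), log (Vᵀ i ⬝ᵥ (W * diagonal e * Wᵀ) *ᵥ Vᵀ i) := by
  have hquad : ∀ i, Vᵀ i ⬝ᵥ (W * diagonal e * Wᵀ) *ᵥ Vᵀ i =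
      ∑ j ∈ univ.filter (e · ≠ 0), (Wᵀ j ⬝ᵥ Vᵀ i) ^ 2 * e j := by
    intro i
    rw [dotProduct_conj_diagonal_mulVec, sum_filter_of_ne fun j _ h => ?_]
    · exact sum_congr rfl fun j _ => mul_comm _ _
    · contrapose! h; simp [h]
  simp only [hquad]
  refine sum_log_le_sum_log_sum_mul (fun _ _ _ _ => sq_nonneg _) (fun i hi => ?_)
    (fun j hj => ?_) (fun j hj => (he j).lt_of_ne' (mem_filter.mp hj).2)
  · rw [sum_sq_dotProduct_row_of_mem_range hW
      (hrange ▸ row_mem_range_conj_diagonal hV (mem_filter.mp hi).2), dotProduct_row_self hV]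
  · simp_rw [dotProduct_comm (Wᵀ j)]
    rw [sum_sq_dotProduct_row_of_mem_range hV
      (hrange ▸ row_mem_range_conj_diagonal hW (mem_filter.mp hj).2), dotProduct_row_self hW]

section LogLikelihood

variable {n r : ℕ} {V : Matrix (Fin r) (Fin r) ℝ}

theorem det0_conj_diagonal (hV : Vᵀ * V = 1) (d : Fin r → ℝ) :
    det0 (V * diagonal d * Vᵀ) = ∏ i, if d i = 0 then 1 else d i := by
  have hA : (V * diagonal d * Vᵀ).IsHermitian := transpose_conj_diagonal d
  have hroots : univ.val.map hA.eigenvalues = univ.val.map d := by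
    have := hA.roots_charpoly_eq_eigenvalues
    rw [charpoly_conj_diagonal hV, Polynomial.roots_prod _ _
      (by simp [prod_ne_zero_iff, Polynomial.X_sub_C_ne_zero])] at this
    simpa using this.symm
  rw [det0, dif_pos hA]
  simpa [prod_eq_multiset_prod, Multiset.map_map, Function.comp_def] using
    congrArg (fun s => (s.map fun x : ℝ => if x = 0 then 1 else x).prod) hroots

theorem log_det0_conj_diagonal (hV : Vᵀ * V = 1) (d : Fin r → ℝ) :
    log (det0 (V * diagonal d * Vᵀ)) = ∑ i ∈ univ.filter (d · ≠ 0), log (d i) := by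
  rw [det0_conj_diagonal hV, log_prod fun i _ => by split_ifs <;> simp_all, sum_filter]
  refine sum_congr rfl fun i _ => ?_
  split_ifs <;> simp_all

noncomputable def logLik (U : Matrix (Fin n) (Fin r) ℝ) (B : Matrix (Fin r) (Fin r) ℝ) : ℝ :=
  -(n : ℝ) * log (det0 B) - (U * pinv B * Uᵀ).trace

theorem logLik_conj_diagonal (U : Matrix (Fin n) (Fin r) ℝ) (hV : Vᵀ * V = 1) (d : Fin r → ℝ) :
    logLik U (V * diagonal d * Vᵀ) = ∑ i ∈ univ.filter (d · ≠ 0),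
      (-(n : ℝ) * log (d i) - (Vᵀ i ⬝ᵥ (Uᵀ * U) *ᵥ Vᵀ i) / d i) := by
  rw [logLik, log_det0_conj_diagonal hV,
    pinv_eq_of_isMoorePenrose (isMoorePenrose_conj_diagonal hV d), trace_mul_cycle,
    trace_mul_comm, trace_conj_diagonal_mul, mul_sum, sum_sub_distrib]
  congr 1
  rw [sum_filter_of_ne fun i _ h => ?_]
  · exact sum_congr rfl fun i _ => by rw [Pi.inv_apply, div_eq_inv_mul]
  · contrapose! h; simp [h]

theorem logLik_conj_diagonal_le (U : Matrix (Fin n) (Fin r) ℝ) (hV : Vᵀ * V = 1)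
    {d : Fin r → ℝ} (hd : 0 ≤ d) (hn : 0 < n)
    (hw : ∀ i, d i ≠ 0 → 0 < Vᵀ i ⬝ᵥ (Uᵀ * U) *ᵥ Vᵀ i) :
    logLik U (V * diagonal d * Vᵀ) ≤ ∑ i ∈ univ.filter (d · ≠ 0),
      (-(n : ℝ) * log (Vᵀ i ⬝ᵥ (Uᵀ * U) *ᵥ Vᵀ i / n) - n) := by
  rw [logLik_conj_diagonal U hV]
  refine sum_le_sum fun i hi => ?_
  have hdi := (mem_filter.mp hi).2
  exact neg_mul_log_sub_div_le (Nat.cast_pos.mpr hn) ((hd i).lt_of_ne' hdi) (hw i hdi)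

theorem logLik_conj_diagonal_of_eq (U : Matrix (Fin n) (Fin r) ℝ) (hV : Vᵀ * V = 1)
    {d : Fin r → ℝ} (hw : ∀ i, d i ≠ 0 → Vᵀ i ⬝ᵥ (Uᵀ * U) *ᵥ Vᵀ i = n * d i) :
    logLik U (V * diagonal d * Vᵀ) = ∑ i ∈ univ.filter (d · ≠ 0), (-(n : ℝ) * log (d i) - n) := by
  rw [logLik_conj_diagonal U hV]
  refine sum_congr rfl fun i hi => ?_
  have hdi := (mem_filter.mp hi).2
  rw [hw i hdi, mul_div_cancel_right₀ _ hdi]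

end LogLikelihood

section Compression

variable {m ι : Type*} [Fintype m] [Fintype ι] (U : Matrix m ι ℝ) {P : Matrix ι ι ℝ}

theorem posSemidef_compression (hPsym : Pᵀ = P) : (P * Uᵀ * U * P).PosSemidef := by
  have h : P * Uᵀ * U * P = (U * P)ᴴ * (U * P) := by
    simp [conjTranspose_eq_transpose_of_trivial, hPsym, Matrix.mul_assoc]
  exact h ▸ posSemidef_conjTranspose_mul_self _

theorem dotProduct_compression_mulVec (hPsym : Pᵀ = P) (x : ι → ℝ) :
    x ⬝ᵥ (P * Uᵀ * U * P) *ᵥ x = P *ᵥ x ⬝ᵥ (Uᵀ * U) *ᵥ (P *ᵥ x) := by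
  rw [Matrix.mul_assoc, Matrix.mul_assoc, ← mulVec_mulVec, dotProduct_mulVec, ← mulVec_transpose,
    hPsym, ← Matrix.mul_assoc, mulVec_mulVec]

theorem mulVec_eq_self_of_mem_range (hPidem : P * P = P) {x : ι → ℝ}
    (hx : x ∈ LinearMap.range P.mulVecLin) : P *ᵥ x = x := by
  obtain ⟨y, rfl⟩ := hx
  rw [mulVecLin_apply, mulVec_mulVec, hPidem]

theorem range_compression (hPsym : Pᵀ = P)
    (hpos : ∀ x : ι → ℝ, P *ᵥ x ≠ 0 → 0 < P *ᵥ x ⬝ᵥ (Uᵀ * U) *ᵥ (P *ᵥ x)) :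
    LinearMap.range (P * Uᵀ * U * P).mulVecLin = LinearMap.range P.mulVecLin := by
  have hle : LinearMap.range (P * Uᵀ * U * P).mulVecLin ≤ LinearMap.range P.mulVecLin := by
    rw [Matrix.mul_assoc, Matrix.mul_assoc, mulVecLin_mul]
    exact LinearMap.range_comp_le_range _ _
  have hker : LinearMap.ker (P * Uᵀ * U * P).mulVecLin ≤ LinearMap.ker P.mulVecLin := by
    intro x hx
    by_contra hPx
    have := hpos x hPx
    rw [← dotProduct_compression_mulVec U hPsym, ← mulVecLin_apply, hx, dotProduct_zero] at this
    exact this.false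
  refine Submodule.eq_of_le_of_finrank_le hle ?_
  have := Submodule.finrank_mono hker
  have := LinearMap.finrank_range_add_finrank_ker (P * Uᵀ * U * P).mulVecLin
  have := LinearMap.finrank_range_add_finrank_ker P.mulVecLin
  omega

theorem dotProduct_smul_compression_mulVec_of_mem_range (hPsym : Pᵀ = P) (hPidem : P * P = P)
    (c : ℝ) {x : ι → ℝ} (hx : x ∈ LinearMap.range P.mulVecLin) :
    x ⬝ᵥ (c • (P * Uᵀ * U * P)) *ᵥ x = c * (x ⬝ᵥ (Uᵀ * U) *ᵥ x) := by
  rw [smul_mulVec, dotProduct_smul, dotProduct_compression_mulVec U hPsym,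
    mulVec_eq_self_of_mem_range hPidem hx, smul_eq_mul]

end Compression

section CookLemma

variable {n r : ℕ} (U : Matrix (Fin n) (Fin r) ℝ) {P : Matrix (Fin r) (Fin r) ℝ}

theorem logLik_inv_smul_compression_of_conj_diagonal (hPsym : Pᵀ = P) (hPidem : P * P = P)
    (hpos : ∀ x : Fin r → ℝ, P *ᵥ x ≠ 0 → 0 < P *ᵥ x ⬝ᵥ (Uᵀ * U) *ᵥ (P *ᵥ x)) (hn : 0 < n)
    {W : Matrix (Fin r) (Fin r) ℝ} {e : Fin r → ℝ} (hW : Wᵀ * W = 1)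
    (hdec : (n : ℝ)⁻¹ • (P * Uᵀ * U * P) = W * diagonal e * Wᵀ) :
    logLik U ((n : ℝ)⁻¹ • (P * Uᵀ * U * P)) =
      ∑ j ∈ univ.filter (e · ≠ 0), (-(n : ℝ) * log (e j) - n) := by
  have hn' : (n : ℝ) ≠ 0 := Nat.cast_ne_zero.mpr hn.ne'
  have hrange := (range_mulVecLin_smul _ (inv_ne_zero hn')).trans (range_compression U hPsym hpos)
  rw [hdec]
  refine logLik_conj_diagonal_of_eq U hW fun j hj => ?_
  have hmem := hrange ▸ hdec ▸ row_mem_range_conj_diagonal hW hj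
  have := dotProduct_smul_compression_mulVec_of_mem_range U hPsym hPidem (n : ℝ)⁻¹ hmem
  rw [hdec, conj_diagonal_mulVec_row hW, dotProduct_smul, dotProduct_row_self hW, smul_eq_mul,
    mul_one] at this
  rw [this, mul_inv_cancel_left₀ hn']

theorem logLik_le_logLik_inv_smul_compression (hPsym : Pᵀ = P) (hPidem : P * P = P)
    (hpos : ∀ x : Fin r → ℝ, P *ᵥ x ≠ 0 → 0 < P *ᵥ x ⬝ᵥ (Uᵀ * U) *ᵥ (P *ᵥ x)) (hn : 0 < n)
    {B : Matrix (Fin r) (Fin r) ℝ} (hB : B.PosSemidef)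
    (hBrange : LinearMap.range B.mulVecLin = LinearMap.range P.mulVecLin) :
    logLik U B ≤ logLik U ((n : ℝ)⁻¹ • (P * Uᵀ * U * P)) := by
  have hn' : (0 : ℝ) < n := Nat.cast_pos.mpr hn
  obtain ⟨W, e, hW, he, hdec⟩ :=
    ((posSemidef_compression U hPsym).smul (inv_nonneg.mpr hn'.le)).exists_conj_diagonal
  obtain ⟨V, d, hV, hd, rfl⟩ := hB.exists_conj_diagonal
  have hmem : ∀ i, d i ≠ 0 → Vᵀ i ∈ LinearMap.range P.mulVecLin :=
    fun i hi => hBrange ▸ row_mem_range_conj_diagonal hV hi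
  have hrange : LinearMap.range (V * diagonal d * Vᵀ).mulVecLin =
      LinearMap.range (W * diagonal e * Wᵀ).mulVecLin := by
    rw [hBrange, ← hdec, range_mulVecLin_smul _ (inv_ne_zero hn'.ne'),
      range_compression U hPsym hpos]
  have hw : ∀ i, d i ≠ 0 → 0 < Vᵀ i ⬝ᵥ (Uᵀ * U) *ᵥ Vᵀ i := fun i hi => by
    have hfix := mulVec_eq_self_of_mem_range hPidem (hmem i hi)
    have hne : Vᵀ i ≠ 0 := fun h0 => by simpa [h0] using dotProduct_row_self hV i
    simpa only [hfix] using hpos (Vᵀ i) (by rwa [hfix])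
  have hlog := sum_log_le_sum_log_dotProduct_conj_diagonal_mulVec hV hW he hrange
  have hcard := card_filter_ne_zero_eq_of_range_eq hV hW hrange
  calc logLik U (V * diagonal d * Vᵀ)
      ≤ ∑ i ∈ univ.filter (d · ≠ 0), (-(n : ℝ) * log (Vᵀ i ⬝ᵥ (Uᵀ * U) *ᵥ Vᵀ i / n) - n) :=
        logLik_conj_diagonal_le U hV hd hn hw
    _ = ∑ i ∈ univ.filter (d · ≠ 0),
          (-(n : ℝ) * log (Vᵀ i ⬝ᵥ (W * diagonal e * Wᵀ) *ᵥ Vᵀ i) - n) :=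
        sum_congr rfl fun i hi => by
          rw [← hdec, dotProduct_smul_compression_mulVec_of_mem_range U hPsym hPidem _
            (hmem i (mem_filter.mp hi).2), inv_mul_eq_div]
    _ ≤ ∑ j ∈ univ.filter (e · ≠ 0), (-(n : ℝ) * log (e j) - n) := by
        simp only [sum_sub_distrib, sum_const, ← mul_sum, nsmul_eq_mul, hcard]
        nlinarith
    _ = logLik U ((n : ℝ)⁻¹ • (P * Uᵀ * U * P)) :=
        (logLik_inv_smul_compression_of_conj_diagonal U hPsym hPidem hpos hn hW hdec).symm

theorem logLik_inv_smul_compression (hPsym : Pᵀ = P) (hPidem : P * P = P)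
    (hpos : ∀ x : Fin r → ℝ, P *ᵥ x ≠ 0 → 0 < P *ᵥ x ⬝ᵥ (Uᵀ * U) *ᵥ (P *ᵥ x)) (hn : 0 < n) :
    logLik U ((n : ℝ)⁻¹ • (P * Uᵀ * U * P)) = (n : ℝ) * (P.rank : ℝ) * log n
      - (n : ℝ) * (P.rank : ℝ) - (n : ℝ) * log (det0 (P * Uᵀ * U * P)) := by
  have hn' : (n : ℝ) ≠ 0 := Nat.cast_ne_zero.mpr hn.ne'
  obtain ⟨W, e, hW, -, hdec⟩ :=
    ((posSemidef_compression U hPsym).smul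
      (by positivity : (0 : ℝ) ≤ (n : ℝ)⁻¹)).exists_conj_diagonal
  have hM : P * Uᵀ * U * P = W * diagonal ((n : ℝ) • e) * Wᵀ := by
    rw [diagonal_smul, Matrix.mul_smul, Matrix.smul_mul, ← hdec, smul_inv_smul₀ hn']
  have hk : P.rank = (univ.filter (e · ≠ 0)).card := by
    rw [← rank_conj_diagonal hW, ← hdec, Matrix.rank, Matrix.rank,
      range_mulVecLin_smul _ (inv_ne_zero hn'), range_compression U hPsym hpos]
  have hS : univ.filter (((n : ℝ) • e) · ≠ 0) = univ.filter (e · ≠ 0) := by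
    simp [hn']
  rw [logLik_inv_smul_compression_of_conj_diagonal U hPsym hPidem hpos hn hW hdec, hM,
    log_det0_conj_diagonal hW, hS, hk]
  simp only [Pi.smul_apply, smul_eq_mul]
  rw [sum_congr rfl fun j hj => log_mul hn' (mem_filter.mp hj).2, sum_add_distrib,
    sum_sub_distrib, sum_const, sum_const, ← mul_sum, nsmul_eq_mul, nsmul_eq_mul]
  ring

end CookLemma

theorem cook_lemma_4_3_general {n r : ℕ}
    (U : Matrix (Fin n) (Fin r) ℝ) (P : Matrix (Fin r) (Fin r) ℝ)
    (hPsym : Pᵀ = P) (hPidem : P * P = P)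
    (hpos : ∀ x : Fin r → ℝ, P.mulVec x ≠ 0 →
      0 < P.mulVec x ⬝ᵥ (Uᵀ * U).mulVec (P.mulVec x)) :
    let l : Matrix (Fin r) (Fin r) ℝ → ℝ :=
      fun B => -(n : ℝ) * Real.log (det0 B) - (U * pinv B * Uᵀ).trace
    let Bstar : Matrix (Fin r) (Fin r) ℝ := (n : ℝ)⁻¹ • (P * Uᵀ * U * P)
    (∀ B : Matrix (Fin r) (Fin r) ℝ, B.PosSemidef →
        LinearMap.range B.mulVecLin = LinearMap.range P.mulVecLin → l B ≤ l Bstar) ∧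
    l Bstar = (n : ℝ) * (P.rank : ℝ) * Real.log n - (n : ℝ) * (P.rank : ℝ)
      - (n : ℝ) * Real.log (det0 (P * Uᵀ * U * P)) := by
  intro l Bstar
  change (∀ B, _ → _ → logLik U B ≤ logLik U Bstar) ∧ logLik U Bstar = _
  rcases Nat.eq_zero_or_pos n with rfl | hn
  · simp [logLik]
  exact ⟨fun B hB hBrange =>
      logLik_le_logLik_inv_smul_compression U hPsym hPidem hpos hn hB hBrange,
    logLik_inv_smul_compression U hPsym hPidem hpos hn⟩

/-- Lemma 4.3 of Cook et al. 2010: over positive semidefinite matrices B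
with column space equal to range(P), where P is an orthogonal projection of rank k > 0
and P Uᵀ U P is positive definite on range(P), the function
l(B) = −n·log det₀(B) − tr(U B† Uᵀ) is maximized at B* = n⁻¹ P Uᵀ U P, with maximum
value nk·log n − nk − n·log det₀(P Uᵀ U P). -/
theorem cook_lemma_4_3 {n r : ℕ}
    (U : Matrix (Fin n) (Fin r) ℝ) (P : Matrix (Fin r) (Fin r) ℝ)
    (hPsym : Pᵀ = P) (hPidem : P * P = P) (hk : 0 < P.rank)
    (hpos : ∀ x : Fin r → ℝ, P.mulVec x ≠ 0 →
      0 < P.mulVec x ⬝ᵥ (Uᵀ * U).mulVec (P.mulVec x)) :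
    let l : Matrix (Fin r) (Fin r) ℝ → ℝ :=
      fun B => -(n : ℝ) * Real.log (det0 B) - (U * pinv B * Uᵀ).trace
    let Bstar : Matrix (Fin r) (Fin r) ℝ := (n : ℝ)⁻¹ • (P * Uᵀ * U * P)
    (∀ B : Matrix (Fin r) (Fin r) ℝ, B.PosSemidef →
        LinearMap.range B.mulVecLin = LinearMap.range P.mulVecLin → l B ≤ l Bstar) ∧
    l Bstar = (n : ℝ) * (P.rank : ℝ) * Real.log n - (n : ℝ) * (P.rank : ℝ)
      - (n : ℝ) * Real.log (det0 (P * Uᵀ * U * P)) :=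
  cook_lemma_4_3_general U P hPsym hPidem hpos
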